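/- Let f : ℝ³ → ℝ be smooth and let α, c ∈ ℝ. Then for every x ∈ ℝ³, L_c^{(α)}(y ↦ (∇×(y×∇f))(y))(x) = (∇×(y ↦ (y×∇(L_c^{(α−1)}f))(y)))(x) − (2α+2)·(∇×(y ↦ (y×∇f)(y)))(x) + 2c²·(‖x‖²∇f(x) − (x·∇f)(x)·x), where L_c^{(β)} acts componentwise on vector fields. -/

import Mathlib

noncomputable section
open MeasureTheory
open scoped RealInnerProductSpace

/-- ℝ³ with the Euclidean structure. -/
abbrev E3 : Type := EuclideanSpace ℝ (Fin 3)

/-- The `i`-th partial derivative ∂ᵢ f. -/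
def pd (i : Fin 3) (f : E3 → ℝ) (x : E3) : ℝ := fderiv ℝ f x (EuclideanSpace.single i 1)

/-- Build a vector of E3 from its three coordinates. -/
def vec (a b c : ℝ) : E3 := (WithLp.equiv 2 (Fin 3 → ℝ)).symm ![a, b, c]

/-- The gradient ∇f. -/
def grad (f : E3 → ℝ) (x : E3) : E3 := vec (pd 0 f x) (pd 1 f x) (pd 2 f x)

/-- The Laplacian Δf = ∂₁²f + ∂₂²f + ∂₃²f. -/
def lap (f : E3 → ℝ) (x : E3) : ℝ := pd 0 (pd 0 f) x + pd 1 (pd 1 f) x + pd 2 (pd 2 f) x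

/-- The radial derivative (x·∇f)(x) = ⟨x, ∇f(x)⟩. -/
def rad (f : E3 → ℝ) (x : E3) : ℝ := ⟪x, grad f x⟫

/-- The cross product in ℝ³. -/
def cross (a b : E3) : E3 :=
  vec (a 1 * b 2 - a 2 * b 1) (a 2 * b 0 - a 0 * b 2) (a 0 * b 1 - a 1 * b 0)

/-- The angular gradient (x×∇f)(x) = x × ∇f(x). -/
def angGrad (f : E3 → ℝ) (x : E3) : E3 := cross x (grad f x)

/-- The divergence ∇·F. -/
def fdiv (F : E3 → E3) (x : E3) : ℝ :=
  pd 0 (fun y => F y 0) x + pd 1 (fun y => F y 1) x + pd 2 (fun y => F y 2) x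

/-- The curl ∇×F. -/
def curl (F : E3 → E3) (x : E3) : E3 :=
  vec (pd 1 (fun y => F y 2) x - pd 2 (fun y => F y 1) x)
      (pd 2 (fun y => F y 0) x - pd 0 (fun y => F y 2) x)
      (pd 0 (fun y => F y 1) x - pd 1 (fun y => F y 0) x)

/-- The Laplace–Beltrami operator Δ₀f(x) = ‖x‖²Δf(x) − (x·∇)(x·∇f)(x) − (x·∇f)(x). -/
def lapBel (f : E3 → ℝ) (x : E3) : ℝ := ‖x‖^2 * lap f x - rad (rad f) x - rad f x

/-- Laplace–Beltrami acting componentwise on vector fields. -/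
def lapBelV (F : E3 → E3) (x : E3) : E3 :=
  vec (lapBel (fun y => F y 0) x) (lapBel (fun y => F y 1) x) (lapBel (fun y => F y 2) x)

/-- The Sturm–Liouville operator of the first kind
L_c^{(α)}f = −Δf + (x·∇)(x·∇f) + (2α+3)(x·∇f) + c²‖x‖²f. -/
def SL (α c : ℝ) (f : E3 → ℝ) (x : E3) : ℝ :=
  -lap f x + rad (rad f) x + (2*α+3) * rad f x + c^2 * ‖x‖^2 * f x

/-- L_c^{(α)} acting componentwise on vector fields. -/
def SLv (α c : ℝ) (F : E3 → E3) (x : E3) : E3 :=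
  vec (SL α c (fun y => F y 0) x) (SL α c (fun y => F y 1) x) (SL α c (fun y => F y 2) x)

/-- The Sturm–Liouville operator of the second kind
D_c^{(α)}F(x) = (1−‖x‖²)^{−α}·(∇×((1−‖y‖²)^{α+1}∇×F))(x) − Δ₀F(x) + c²‖x‖²F(x). -/
def Dop (α c : ℝ) (F : E3 → E3) (x : E3) : E3 :=
  ((1 - ‖x‖^2) ^ (-α) : ℝ) • curl (fun y => ((1 - ‖y‖^2) ^ (α+1) : ℝ) • curl F y) x
    - lapBelV F x + (c^2 * ‖x‖^2) • F x

/-- The operator (xᵢ∂ⱼ − xⱼ∂ᵢ). -/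
def angDer (i j : Fin 3) (g : E3 → ℝ) (y : E3) : ℝ := y i * pd j g y - y j * pd i g y


section Aux

@[fun_prop] lemma coord_smooth (i : Fin 3) : ContDiff ℝ (⊤ : ℕ∞) (fun y : E3 => y i) :=
  (EuclideanSpace.proj i : E3 →L[ℝ] ℝ).contDiff
@[fun_prop] lemma coord_diff (i : Fin 3) : Differentiable ℝ (fun y : E3 => y i) :=
  (coord_smooth i).differentiable (by simp)
@[fun_prop] lemma pd_smooth (i : Fin 3) (f : E3 → ℝ) (hf : ContDiff ℝ (⊤ : ℕ∞) f) :
    ContDiff ℝ (⊤ : ℕ∞) (pd i f) := by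
  unfold pd
  exact (hf.fderiv_right (by simp)).clm_apply contDiff_const
@[fun_prop] lemma pd_diff (i : Fin 3) (f : E3 → ℝ) (hf : ContDiff ℝ (⊤ : ℕ∞) f) :
    Differentiable ℝ (pd i f) :=
  (pd_smooth i f hf).differentiable (by simp)

lemma pd_add (i : Fin 3) {g h : E3 → ℝ} {x : E3} (hg : DifferentiableAt ℝ g x)
    (hh : DifferentiableAt ℝ h x) :
    pd i (fun y => g y + h y) x = pd i g x + pd i h x := by
  simp [pd, fderiv_fun_add hg hh]
lemma pd_sub (i : Fin 3) {g h : E3 → ℝ} {x : E3} (hg : DifferentiableAt ℝ g x)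
    (hh : DifferentiableAt ℝ h x) :
    pd i (fun y => g y - h y) x = pd i g x - pd i h x := by
  simp [pd, fderiv_fun_sub hg hh]
lemma pd_neg (i : Fin 3) {g : E3 → ℝ} {x : E3} :
    pd i (fun y => -g y) x = -pd i g x := by
  simp [pd, fderiv_neg]
lemma pd_mul (i : Fin 3) {g h : E3 → ℝ} {x : E3} (hg : DifferentiableAt ℝ g x)
    (hh : DifferentiableAt ℝ h x) :
    pd i (fun y => g y * h y) x = pd i g x * h x + g x * pd i h x := by
  simp [pd, fderiv_fun_mul hg hh]; ring
lemma pd_const (i : Fin 3) (a : ℝ) (x : E3) : pd i (fun _ => a) x = 0 := by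
  simp [pd]
lemma pd_coord (i j : Fin 3) (x : E3) :
    pd i (fun y => y j) x = if j = i then 1 else 0 := by
  have : (fun y : E3 => y j) = (EuclideanSpace.proj j : E3 →L[ℝ] ℝ) := rfl
  rw [pd, this, ContinuousLinearMap.fderiv]
  simp [EuclideanSpace.proj, EuclideanSpace.single_apply]

lemma pd_add_fun (i : Fin 3) {g h : E3 → ℝ} (hg : Differentiable ℝ g)
    (hh : Differentiable ℝ h) :
    pd i (fun y => g y + h y) = fun x => pd i g x + pd i h x :=
  funext fun x => pd_add i (hg x) (hh x)
lemma pd_sub_fun (i : Fin 3) {g h : E3 → ℝ} (hg : Differentiable ℝ g)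
    (hh : Differentiable ℝ h) :
    pd i (fun y => g y - h y) = fun x => pd i g x - pd i h x :=
  funext fun x => pd_sub i (hg x) (hh x)
lemma pd_neg_fun (i : Fin 3) {g : E3 → ℝ} :
    pd i (fun y => -g y) = fun x => -pd i g x :=
  funext fun _ => pd_neg i
lemma pd_mul_fun (i : Fin 3) {g h : E3 → ℝ} (hg : Differentiable ℝ g)
    (hh : Differentiable ℝ h) :
    pd i (fun y => g y * h y) = fun x => pd i g x * h x + g x * pd i h x :=
  funext fun x => pd_mul i (hg x) (hh x)
lemma pd_const_fun (i : Fin 3) (a : ℝ) : pd i (fun _ : E3 => a) = fun _ => 0 :=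
  funext fun x => pd_const i a x

lemma pd_c00 : pd 0 (fun y : E3 => y 0) = fun _ => 1 := by funext x; simp [pd_coord]
lemma pd_c01 : pd 0 (fun y : E3 => y 1) = fun _ => 0 := by funext x; simp [pd_coord]
lemma pd_c02 : pd 0 (fun y : E3 => y 2) = fun _ => 0 := by funext x; simp [pd_coord]
lemma pd_c10 : pd 1 (fun y : E3 => y 0) = fun _ => 0 := by funext x; simp [pd_coord]
lemma pd_c11 : pd 1 (fun y : E3 => y 1) = fun _ => 1 := by funext x; simp [pd_coord]
lemma pd_c12 : pd 1 (fun y : E3 => y 2) = fun _ => 0 := by funext x; simp [pd_coord]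
lemma pd_c20 : pd 2 (fun y : E3 => y 0) = fun _ => 0 := by funext x; simp [pd_coord]
lemma pd_c21 : pd 2 (fun y : E3 => y 1) = fun _ => 0 := by funext x; simp [pd_coord]
lemma pd_c22 : pd 2 (fun y : E3 => y 2) = fun _ => 1 := by funext x; simp [pd_coord]

lemma pd_swap (i j : Fin 3) (g : E3 → ℝ) (hg : ContDiff ℝ (⊤ : ℕ∞) g) :
    pd i (pd j g) = pd j (pd i g) := by
  funext x
  have hd : DifferentiableAt ℝ (fderiv ℝ g) x :=
    ((hg.fderiv_right (m := (⊤ : ℕ∞)) (by simp)).differentiable (by simp)) x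
  have key : ∀ (k : Fin 3) (v : E3), pd k (fun y => fderiv ℝ g y v) x
      = fderiv ℝ (fderiv ℝ g) x (EuclideanSpace.single k 1) v := by
    intro k v
    rw [pd, fderiv_clm_apply hd (differentiableAt_const v)]
    simp
  have h1 : ∀ y, HasFDerivAt g (fderiv ℝ g y) y := fun y =>
    ((hg.differentiable (by simp)) y).hasFDerivAt
  have h2 : HasFDerivAt (fderiv ℝ g) (fderiv ℝ (fderiv ℝ g) x) x := hd.hasFDerivAt
  show pd i (fun y => fderiv ℝ g y _) x = pd j (fun y => fderiv ℝ g y _) x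
  rw [key, key]
  exact (second_derivative_symmetric h1 h2 _ _).symm

lemma pd_swap10 (g : E3 → ℝ) (hg : ContDiff ℝ (⊤ : ℕ∞) g) : pd 1 (pd 0 g) = pd 0 (pd 1 g) :=
  pd_swap 1 0 g hg
lemma pd_swap20 (g : E3 → ℝ) (hg : ContDiff ℝ (⊤ : ℕ∞) g) : pd 2 (pd 0 g) = pd 0 (pd 2 g) :=
  pd_swap 2 0 g hg
lemma pd_swap21 (g : E3 → ℝ) (hg : ContDiff ℝ (⊤ : ℕ∞) g) : pd 2 (pd 1 g) = pd 1 (pd 2 g) :=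
  pd_swap 2 1 g hg

lemma vec_0 (a b c : ℝ) : vec a b c 0 = a := rfl
lemma vec_1 (a b c : ℝ) : vec a b c 1 = b := rfl
lemma vec_2 (a b c : ℝ) : vec a b c 2 = c := rfl
lemma normSq (x : E3) : ‖x‖^2 = x 0 * x 0 + x 1 * x 1 + x 2 * x 2 := by
  rw [← real_inner_self_eq_norm_sq]
  simp only [PiLp.inner_apply, Fin.sum_univ_three, RCLike.inner_apply, conj_trivial]
lemma rad_fun (g : E3 → ℝ) :
    rad g = fun x => x 0 * pd 0 g x + x 1 * pd 1 g x + x 2 * pd 2 g x := by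
  funext x
  simp [rad, grad, PiLp.inner_apply, Fin.sum_univ_three]
  simp only [vec_0, vec_1, vec_2]; ring
lemma SL_fun (α c : ℝ) (g : E3 → ℝ) :
    SL α c g
      = fun x => -lap g x + rad (rad g) x + (2*α+3) * rad g x + c^2 * ‖x‖^2 * g x := rfl
lemma lap_fun (g : E3 → ℝ) :
    lap g = fun x => pd 0 (pd 0 g) x + pd 1 (pd 1 g) x + pd 2 (pd 2 g) x := rfl

end Aux

set_option maxHeartbeats 12000000 in

/-- L_c^{(α)}(∇×(x×∇f)) = ∇×(x×∇(L_c^{(α−1)}f)) − (2α+2)∇×(x×∇f)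
 + 2c²(‖x‖²∇f − (x·∇f)x). -/
theorem stmt_13 (f : E3 → ℝ) (hf : ContDiff ℝ (⊤ : ℕ∞) f) (α c : ℝ) :
    ∀ x : E3,
      SLv α c (fun y => curl (angGrad f) y) x
        = curl (angGrad (SL (α-1) c f)) x - (2*α+2) • curl (angGrad f) x
            + (2*c^2) • (‖x‖^2 • grad f x - rad f x • x) := by
  intro x
  have hfd : Differentiable ℝ f := hf.differentiable (by simp)
  have key : ∀ i : Fin 3,
      SLv α c (fun y => curl (angGrad f) y) x i
        = (curl (angGrad (SL (α-1) c f)) x - (2*α+2) • curl (angGrad f) x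
            + (2*c^2) • (‖x‖^2 • grad f x - rad f x • x)) i := by
    have comp : ∀ i : Fin 3, i = 0 ∨ i = 1 ∨ i = 2 := by decide
    intro i
    rcases comp i with h | h | h <;> subst h <;>
    · simp only [SLv, SL_fun, curl, angGrad, cross, grad, lap_fun, rad_fun,
        vec_0, vec_1, vec_2, normSq, PiLp.smul_apply, PiLp.sub_apply,
        PiLp.add_apply, smul_eq_mul]
      simp (disch := fun_prop) only [pd_add_fun, pd_sub_fun, pd_mul_fun, pd_neg_fun,
        pd_const_fun, pd_c00, pd_c01, pd_c02, pd_c10, pd_c11, pd_c12, pd_c20, pd_c21, pd_c22]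
      simp (disch := fun_prop) only [pd_swap10, pd_swap20, pd_swap21]
      ring
  ext i
  exact key i
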